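/- Let X be an abstract simplicial complex on a finite vertex set V with h(X) = d and vertex weight function ω. Then for every k ≥ 0 and every σ ∈ X(k), Σ_{η} Σ_{v∈lk_X(η)} ω(v) ≤ d·Σ_{v∈V} ω(v) − (d−1)·Σ_{v∈σ} ω(v) + (k+1−d)·Σ_{v∈lk_X(σ)} ω(v), where the outer sum runs over the k-element subsets η of σ (the codimension-one faces of σ). -/

import Mathlib

open Finset

/-- An abstract simplicial complex on the vertex type `V`: a collection of finite subsets of `V`
closed under taking subsets and containing the empty set. -/
structure AbstractSC (V : Type*) where
  faces : Finset (Finset V)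
  empty_mem : ∅ ∈ faces
  down_closed : ∀ ⦃σ τ : Finset V⦄, σ ∈ faces → τ ⊆ σ → τ ∈ faces

variable {V : Type*} [Fintype V] [LinearOrder V]

namespace AbstractSC

/-- The link of a face `σ`: the vertices `v ∉ σ` with `σ ∪ {v}` a face. -/
def link (X : AbstractSC V) (σ : Finset V) : Finset V :=
  univ.filter fun v => v ∉ σ ∧ insert v σ ∈ X.faces

/-- The dimension of the complex (as an integer, so that `dim {∅} = -1`). -/
def dimension (X : AbstractSC V) : ℤ :=
  ((X.faces.sup Finset.card : ℕ) : ℤ) - 1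

/-- The faces of cardinality `s`, i.e. the `(s-1)`-simplices. -/
def facesOfCard (X : AbstractSC V) (s : ℕ) : Finset (Finset V) :=
  X.faces.filter fun σ => σ.card = s

/-- The type of faces of cardinality `s` (the `(s-1)`-simplices). -/
abbrev Face (X : AbstractSC V) (s : ℕ) := {σ : Finset V // σ ∈ X.faces ∧ σ.card = s}

/-- `h(X)`: the maximal dimension of a missing face (a non-face all of whose proper
subsets are faces), as an integer. -/
def hdim (X : AbstractSC V) : ℤ :=
  (((univ.powerset.filter fun σ : Finset V =>
      σ ∉ X.faces ∧ ∀ τ : Finset V, τ ⊂ σ → τ ∈ X.faces).sup Finset.card : ℕ) : ℤ) - 1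

end AbstractSC

/-- The sign `(-1)^{ε(σ,τ)}`, where `ε(σ,τ)` is the number of elements of `σ ∩ τ` lying
strictly between the unique element of `σ \ τ` and the unique element of `τ \ σ`. -/
def epsSign (σ τ : Finset V) : ℝ :=
  if h : (σ \ τ).Nonempty ∧ (τ \ σ).Nonempty then
    (-1 : ℝ) ^ ((σ ∩ τ).filter fun w =>
        min ((σ \ τ).min' h.1) ((τ \ σ).min' h.2) < w ∧
          w < max ((σ \ τ).min' h.1) ((τ \ σ).min' h.2)).card
  else 1

/-- The vertex-weighted `(s-1)`-dimensional Laplacian `L_{s-1}^ω(X)`, as a matrix indexed by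
the faces of cardinality `s`. -/
noncomputable def lapFull (X : AbstractSC V) (ω : V → ℝ) (s : ℕ) :
    Matrix (X.Face s) (X.Face s) ℝ := fun σ τ =>
  if σ = τ then (∑ v ∈ X.link σ.1, ω v) + ∑ v ∈ σ.1, ω v
  else if (σ.1 ∩ τ.1).card + 1 = s ∧ σ.1 ∪ τ.1 ∉ X.faces then
    epsSign σ.1 τ.1 * ∏ v ∈ τ.1 \ σ.1, ω v
  else 0

/-- The vertex-weighted `k`-dimensional Laplacian, for an integer `k ≥ -1`. -/
noncomputable def lapZ (X : AbstractSC V) (ω : V → ℝ) (k : ℤ) :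
    Matrix (X.Face (k + 1).toNat) (X.Face (k + 1).toNat) ℝ :=
  lapFull X ω (k + 1).toNat

/-- The vertex-weighted `(s-1)`-dimensional down-Laplacian `L_{s-1}^{ω,down}(X)`. -/
noncomputable def lapDown (X : AbstractSC V) (ω : V → ℝ) (s : ℕ) :
    Matrix (X.Face s) (X.Face s) ℝ := fun σ τ =>
  if σ = τ then ∑ v ∈ σ.1, ω v
  else if (σ.1 ∩ τ.1).card + 1 = s then epsSign σ.1 τ.1 * ∏ v ∈ τ.1 \ σ.1, ω v
  else 0

/-- The vertex-weighted `(s-1)`-dimensional up-Laplacian of a collection `F` of faces,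
as a matrix indexed by all `s`-element subsets of `V`. -/
noncomputable def lapUpF (F : Finset (Finset V)) (ω : V → ℝ) (s : ℕ) :
    Matrix {σ : Finset V // σ.card = s} {σ : Finset V // σ.card = s} ℝ := fun σ τ =>
  if σ = τ then
    (if σ.1 ∈ F then ∑ u ∈ univ.filter (fun v => v ∉ σ.1 ∧ insert v σ.1 ∈ F), ω u else 0)
  else if (σ.1 ∩ τ.1).card + 1 = s ∧ σ.1 ∪ τ.1 ∈ F then
    -(epsSign σ.1 τ.1 * ∏ v ∈ τ.1 \ σ.1, ω v)
  else 0

/-- The faces of the complex `X_{s-1}^c`, generated by the `s`-element subsets of `V`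
that are not faces of `X`. -/
def complFaces (X : AbstractSC V) (s : ℕ) : Finset (Finset V) :=
  univ.powerset.filter fun τ => ∃ σ : Finset V, σ.card = s ∧ σ ∉ X.faces ∧ τ ⊆ σ

/-- The faces of the `(s-1)`-skeleton of the complete simplicial complex on `V`:
all subsets of cardinality at most `s`. -/
def skeletonFaces (V : Type*) [Fintype V] [DecidableEq V] (s : ℕ) : Finset (Finset V) :=
  univ.powerset.filter fun σ : Finset V => σ.card ≤ s

/-- The vertex-weighted Laplacian `L^ω(G_X)` of the underlying graph of `X`. -/
noncomputable def graphLap (X : AbstractSC V) (ω : V → ℝ) : Matrix V V ℝ := fun u v =>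
  if u = v then ∑ w ∈ univ.filter (fun w => w ≠ u ∧ ({u, w} : Finset V) ∈ X.faces), ω w
  else if ({u, v} : Finset V) ∈ X.faces then -ω v
  else 0

/-- The matrix `J^ω`, with `(u,v)` entry `ω v`. -/
noncomputable def Jmat (ω : V → ℝ) : Matrix V V ℝ := fun _ v => ω v

/-- `N_σ(u)`: the codimension-one faces `η` of `σ` with `η ∪ {u} ∈ X`. -/
def Nset (X : AbstractSC V) (σ : Finset V) (u : V) : Finset (Finset V) :=
  (σ.powersetCard (σ.card - 1)).filter fun η => insert u η ∈ X.faces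

/-- `σ[j]`: the vertices `u` lying in the link of every vertex of `σ` but not in the link of
`σ`, with `|N_σ(u)| = j`. -/
def bracket (X : AbstractSC V) (σ : Finset V) (j : ℕ) : Finset V :=
  univ.filter fun u =>
    (∀ v ∈ σ, u ≠ v ∧ ({v, u} : Finset V) ∈ X.faces) ∧
      insert u σ ∉ X.faces ∧ (Nset X σ u).card = j

/-- The multiset of eigenvalues (with multiplicity) of a real square matrix:
the roots of its characteristic polynomial. -/
noncomputable def spec {m : Type*} [Fintype m] [DecidableEq m] (M : Matrix m m ℝ) :
    Multiset ℝ :=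
  M.charpoly.roots

/-- The `i`-th smallest eigenvalue (1-indexed, with multiplicity). -/
noncomputable def eigAsc {m : Type*} [Fintype m] [DecidableEq m] (M : Matrix m m ℝ)
    (i : ℕ) : ℝ :=
  ((spec M).sort (· ≤ ·)).getD (i - 1) 0

/-- The `i`-th largest eigenvalue (1-indexed, with multiplicity). -/
noncomputable def eigDesc {m : Type*} [Fintype m] [DecidableEq m] (M : Matrix m m ℝ)
    (i : ℕ) : ℝ :=
  ((spec M).sort (· ≤ ·)).getD ((spec M).card - i) 0

/-- `S^↑_{c,i}(M)`: the `i`-th smallest element (1-indexed) of the multiset of all sums of `c`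
of the eigenvalues of `M` (over `c`-element subsets of the index set of the eigenvalues,
listed in increasing order). -/
noncomputable def sumsAsc {m : Type*} [Fintype m] [DecidableEq m] (M : Matrix m m ℝ)
    (c i : ℕ) : ℝ :=
  ((((Finset.range (spec M).card).powersetCard c).val.map
      fun J => ∑ j ∈ J, ((spec M).sort (· ≤ ·)).getD j 0).sort (· ≤ ·)).getD (i - 1) 0

/-- Minimum of a real-valued function over a finite set (junk value `0` on `∅`). -/
noncomputable def minOver {α : Type*} (s : Finset α) (f : α → ℝ) : ℝ :=
  WithTop.untopD 0 (s.image f).min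

/-- Maximum of a real-valued function over a finite set (junk value `0` on `∅`). -/
noncomputable def maxOver {α : Type*} (s : Finset α) (f : α → ℝ) : ℝ :=
  WithBot.unbotD 0 (s.image f).max

/-- The multiset of all sums `λ_0 + ⋯ + λ_{m-1}` over choices of one element `λ_j` from each
multiset `s j`, counted with multiplicity. -/
noncomputable def multisetSumChoices : (m : ℕ) → (Fin m → Multiset ℝ) → Multiset ℝ
  | 0, _ => {0}
  | m + 1, s => (s 0).bind fun a => (multisetSumChoices m fun j => s j.succ).map (a + ·)

private lemma exists_minimal_nonface {V : Type*} [DecidableEq V] (X : AbstractSC V) :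
    ∀ s : Finset V, s ∉ X.faces → ∃ τ, τ ⊆ s ∧ τ ∉ X.faces ∧ ∀ ρ ⊂ τ, ρ ∈ X.faces := by
  intro s
  induction s using Finset.strongInduction with
  | _ s ih =>
    intro hs
    by_cases h : ∀ ρ ⊂ s, ρ ∈ X.faces
    · exact ⟨s, Finset.Subset.rfl, hs, h⟩
    · push_neg at h
      obtain ⟨ρ, hρs, hρ⟩ := h
      obtain ⟨τ, h1, h2, h3⟩ := ih ρ hρs hρ
      exact ⟨τ, h1.trans hρs.subset, h2, h3⟩

private lemma eq_erase_of_facet {V : Type*} [DecidableEq V] {σ η : Finset V} {k : ℕ} {w : V}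
    (hsub : η ⊆ σ) (hηc : η.card = k) (hσc : σ.card = k + 1) (hwσ : w ∈ σ) (hwη : w ∉ η) :
    η = σ.erase w := by
  have h1 : η ⊆ σ.erase w := Finset.subset_erase.2 ⟨hsub, hwη⟩
  have h2 : (σ.erase w).card = k := by simp [Finset.card_erase_of_mem hwσ, hσc]
  exact Finset.eq_of_subset_of_card_le h1 (by omega)

/-- For every `k ≥ 0` and every `k`-simplex `σ` of `X`,
`Σ_{η∈σ(k-1)} Σ_{v∈lk_X(η)} ω(v) ≤ d·Σ_{v∈V} ω(v) - (d-1)·Σ_{v∈σ} ω(v)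
  + (k+1-d)·Σ_{v∈lk_X(σ)} ω(v)`, where `d = h(X)` and the outer sum runs over the
`k`-element subsets of `σ`. -/
theorem statement8 {V : Type*} [Fintype V] [LinearOrder V]
    (X : AbstractSC V) (ω : V → ℝ) (hω : ∀ v, 0 < ω v)
    (hvert : ∀ v : V, ({v} : Finset V) ∈ X.faces)
    (d : ℕ) (hd : X.hdim = (d : ℤ))
    (k : ℕ) (σ : Finset V) (hσ : σ ∈ X.faces) (hcard : σ.card = k + 1) :
    ∑ η ∈ σ.powersetCard k, ∑ v ∈ X.link η, ω v ≤
      (d : ℝ) * ∑ v, ω v - ((d : ℝ) - 1) * ∑ v ∈ σ, ω v +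
        ((k : ℝ) + 1 - (d : ℝ)) * ∑ v ∈ X.link σ, ω v := by
  classical
  -- the sup in hdim equals d+1
  have hsup : ((univ.powerset.filter fun σ : Finset V =>
      σ ∉ X.faces ∧ ∀ τ : Finset V, τ ⊂ σ → τ ∈ X.faces).sup Finset.card) = d + 1 := by
    unfold AbstractSC.hdim at hd
    omega
  have hmiss : ∀ τ : Finset V, τ ∉ X.faces → (∀ ρ ⊂ τ, ρ ∈ X.faces) → τ.card ≤ d + 1 := by
    intro τ h1 h2
    have hm : τ ∈ (univ.powerset.filter fun σ : Finset V =>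
        σ ∉ X.faces ∧ ∀ τ : Finset V, τ ⊂ σ → τ ∈ X.faces) :=
      Finset.mem_filter.2 ⟨Finset.mem_powerset.2 (Finset.subset_univ _), h1, h2⟩
    calc τ.card ≤ _ := Finset.le_sup hm
      _ = d + 1 := hsup
  -- pointwise counting bound
  have key : ∀ v : V, (((σ.powersetCard k).filter fun η => v ∈ X.link η).card : ℝ) ≤
      (if v ∈ σ then 1 else if v ∈ X.link σ then (k : ℝ) + 1 else d) := by
    intro v
    by_cases hvσ : v ∈ σ
    · rw [if_pos hvσ]
      have : ((σ.powersetCard k).filter fun η => v ∈ X.link η).card ≤ 1 := by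
        refine Finset.card_le_one.2 fun η₁ h₁ η₂ h₂ => ?_
        simp only [Finset.mem_filter, Finset.mem_powersetCard, AbstractSC.link,
          Finset.mem_filter, Finset.mem_univ, true_and] at h₁ h₂
        rw [eq_erase_of_facet h₁.1.1 h₁.1.2 hcard hvσ h₁.2.1,
          eq_erase_of_facet h₂.1.1 h₂.1.2 hcard hvσ h₂.2.1]
      exact_mod_cast this
    · rw [if_neg hvσ]
      by_cases hvL : v ∈ X.link σ
      · rw [if_pos hvL]
        have : ((σ.powersetCard k).filter fun η => v ∈ X.link η).card ≤ k + 1 := by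
          calc _ ≤ (σ.powersetCard k).card := Finset.card_filter_le _ _
            _ = (k + 1).choose k := by rw [Finset.card_powersetCard, hcard]
            _ = k + 1 := Nat.choose_succ_self_right k
        exact_mod_cast this
      · rw [if_neg hvL]
        have hnon : insert v σ ∉ X.faces := by
          intro hmem
          exact hvL (Finset.mem_filter.2 ⟨Finset.mem_univ _, hvσ, hmem⟩)
        obtain ⟨τ, hτsub, hτnon, hτmin⟩ := exists_minimal_nonface X _ hnon
        have hvτ : v ∈ τ := by
          by_contra hvτ
          have : τ ⊆ σ := fun x hx => by
            rcases Finset.mem_insert.1 (hτsub hx) with h | h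
            · exact absurd (h ▸ hx) hvτ
            · exact h
          exact hτnon (X.down_closed hσ this)
        have hτcard : τ.card ≤ d + 1 := hmiss τ hτnon hτmin
        -- injection into τ.erase v
        have hinj : ((σ.powersetCard k).filter fun η => v ∈ X.link η).card ≤
            (τ.erase v).card := by
          refine Finset.card_le_card_of_injOn
            (fun η => if h : (σ \ η).Nonempty then (σ \ η).min' h else v) ?_ ?_
          · intro η hη
            simp only [Finset.mem_coe, Finset.mem_filter, Finset.mem_powersetCard, AbstractSC.link,
              Finset.mem_filter, Finset.mem_univ, true_and] at hη
            obtain ⟨⟨hsub, hηc⟩, hvη, hins⟩ := hη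
            have hne : (σ \ η).Nonempty := by
              rw [← Finset.card_pos, Finset.card_sdiff_of_subset hsub, hηc, hcard]; omega
            dsimp only
            rw [dif_pos hne]
            set w := (σ \ η).min' hne with hw
            have hwmem : w ∈ σ \ η := Finset.min'_mem _ _
            rw [Finset.mem_sdiff] at hwmem
            by_contra hwτ
            have hηe : η = σ.erase w := eq_erase_of_facet hsub hηc hcard hwmem.1 hwmem.2
            have hτη : τ ⊆ insert v η := by
              intro x hx
              rcases Finset.mem_insert.1 (hτsub hx) with h | h
              · exact h ▸ Finset.mem_insert_self _ _
              · refine Finset.mem_insert_of_mem ?_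
                rw [hηe, Finset.mem_erase]
                refine ⟨fun hxw => hwτ ?_, h⟩
                exact hxw ▸ Finset.mem_erase.2 ⟨fun hxv => hvσ (hxv ▸ hxw ▸ h), hx⟩
            exact hτnon (X.down_closed hins hτη)
          · intro η₁ h₁ η₂ h₂ heq
            simp only [Finset.coe_filter, Set.mem_setOf_eq, Finset.mem_powersetCard,
              AbstractSC.link, Finset.mem_filter, Finset.mem_univ, true_and] at h₁ h₂
            obtain ⟨⟨hsub₁, hc₁⟩, -⟩ := h₁
            obtain ⟨⟨hsub₂, hc₂⟩, -⟩ := h₂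
            have hne₁ : (σ \ η₁).Nonempty := by
              rw [← Finset.card_pos, Finset.card_sdiff_of_subset hsub₁, hc₁, hcard]; omega
            have hne₂ : (σ \ η₂).Nonempty := by
              rw [← Finset.card_pos, Finset.card_sdiff_of_subset hsub₂, hc₂, hcard]; omega
            dsimp only at heq
            rw [dif_pos hne₁, dif_pos hne₂] at heq
            have hw₁ : (σ \ η₁).min' hne₁ ∈ σ \ η₁ := Finset.min'_mem _ _
            have hw₂ : (σ \ η₂).min' hne₂ ∈ σ \ η₂ := Finset.min'_mem _ _
            rw [Finset.mem_sdiff] at hw₁ hw₂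
            rw [eq_erase_of_facet hsub₁ hc₁ hcard hw₁.1 hw₁.2,
              eq_erase_of_facet hsub₂ hc₂ hcard hw₂.1 hw₂.2, heq]
        have : ((σ.powersetCard k).filter fun η => v ∈ X.link η).card ≤ d := by
          have hc := Finset.card_erase_of_mem hvτ
          have h1 : 1 ≤ τ.card := Finset.card_pos.2 ⟨v, hvτ⟩
          omega
        exact_mod_cast this
  -- rewrite LHS as a weighted vertex sum
  have hswap : ∑ η ∈ σ.powersetCard k, ∑ v ∈ X.link η, ω v =
      ∑ v : V, (((σ.powersetCard k).filter fun η => v ∈ X.link η).card : ℝ) * ω v := by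
    calc ∑ η ∈ σ.powersetCard k, ∑ v ∈ X.link η, ω v
        = ∑ η ∈ σ.powersetCard k, ∑ v : V, if v ∈ X.link η then ω v else 0 := by
          refine Finset.sum_congr rfl fun η _ => ?_
          rw [Finset.sum_ite_mem, Finset.univ_inter]
      _ = ∑ v : V, ∑ η ∈ σ.powersetCard k, if v ∈ X.link η then ω v else 0 :=
          Finset.sum_comm
      _ = _ := by
          refine Finset.sum_congr rfl fun v _ => ?_
          rw [Finset.sum_ite, Finset.sum_const, Finset.sum_const_zero, add_zero,
            nsmul_eq_mul]
  -- bound by the piecewise coefficient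
  have hle : ∑ η ∈ σ.powersetCard k, ∑ v ∈ X.link η, ω v ≤
      ∑ v : V, (if v ∈ σ then 1 else if v ∈ X.link σ then (k : ℝ) + 1 else d) * ω v := by
    rw [hswap]
    exact Finset.sum_le_sum fun v _ => mul_le_mul_of_nonneg_right (key v) (hω v).le
  -- partition of the vertex set
  have hdisj : Disjoint σ (X.link σ) := by
    refine Finset.disjoint_left.2 fun v hv hv' => ?_
    exact (Finset.mem_filter.1 hv').2.1 hv
  have hsplit : ∀ f : V → ℝ, ∑ v : V, f v =
      ∑ v ∈ σ, f v + ∑ v ∈ X.link σ, f v + ∑ v ∈ univ \ (σ ∪ X.link σ), f v := by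
    intro f
    have h := Finset.sum_sdiff (f := f) (Finset.subset_univ (σ ∪ X.link σ))
    rw [Finset.sum_union hdisj] at h
    linarith
  have hb := hsplit fun v => (if v ∈ σ then 1 else if v ∈ X.link σ then (k : ℝ) + 1 else d) * ω v
  have hω' := hsplit ω
  have e1 : ∑ v ∈ σ, (if v ∈ σ then 1 else if v ∈ X.link σ then (k : ℝ) + 1 else d) * ω v
      = ∑ v ∈ σ, ω v := by
    refine Finset.sum_congr rfl fun v hv => ?_
    rw [if_pos hv, one_mul]
  have e2 : ∑ v ∈ X.link σ,
      (if v ∈ σ then 1 else if v ∈ X.link σ then (k : ℝ) + 1 else d) * ω v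
      = ((k : ℝ) + 1) * ∑ v ∈ X.link σ, ω v := by
    rw [Finset.mul_sum]
    refine Finset.sum_congr rfl fun v hv => ?_
    rw [if_neg (Finset.disjoint_right.1 hdisj hv), if_pos hv]
  have e3 : ∑ v ∈ univ \ (σ ∪ X.link σ),
      (if v ∈ σ then 1 else if v ∈ X.link σ then (k : ℝ) + 1 else d) * ω v
      = (d : ℝ) * ∑ v ∈ univ \ (σ ∪ X.link σ), ω v := by
    rw [Finset.mul_sum]
    refine Finset.sum_congr rfl fun v hv => ?_
    rw [Finset.mem_sdiff, Finset.mem_union] at hv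
    rw [if_neg (fun h => hv.2 (Or.inl h)), if_neg (fun h => hv.2 (Or.inr h))]
  rw [hb, e1, e2, e3] at hle
  nlinarith [hle, hω']
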